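/- arXiv:0706.1810 — 3 statements merged into one kernel-verified Lean document; each statement's English description precedes it below -/
import Mathlib

section
/- Let p be an odd prime and n = (p^p - 1)/(p-1). Then there exists ξ in the algebraic closure of F_p such that (ξ + λ)^n = 1 for all λ in F_p; in fact, any root ξ of the polynomial x^p - x - 1 has this property, i.e. (ξ+λ)^((p^p-1)/(p-1)) = 1 for each λ ∈ F_p. -/
open Polynomial Finset

theorem artin_schreier_root_property (p : ℕ) [Fact p.Prime] (hodd : Odd p)
    (ξ : AlgebraicClosure (ZMod p)) (hξ : ξ ^ p - ξ - 1 = 0) :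
    ∀ lam : ZMod p,
      (ξ + algebraMap (ZMod p) (AlgebraicClosure (ZMod p)) lam) ^ ((p ^ p - 1) / (p - 1))
        = 1 := by
  intro lam
  set f := algebraMap (ZMod p) (AlgebraicClosure (ZMod p)) with hf
  have hp : p.Prime := Fact.out
  have hchar : CharP (AlgebraicClosure (ZMod p)) p :=
    charP_of_injective_algebraMap f.injective p
  set y := ξ + f lam with hy
  have hfp : ∀ a : ZMod p, (f a) ^ p = f a := by
    intro a; rw [← map_pow, ZMod.pow_card]
  have hyp : y ^ p = y + 1 := by
    rw [hy, add_pow_char, hfp]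
    have hξp : ξ ^ p = ξ + 1 := by linear_combination hξ
    rw [hξp]; ring
  have hk : ∀ k : ℕ, y ^ (p ^ k) = y + (k : AlgebraicClosure (ZMod p)) := by
    intro k; induction k with
    | zero => simp
    | succ k ih =>
      have hcast : ((k : AlgebraicClosure (ZMod p))) ^ p = (k : AlgebraicClosure (ZMod p)) := by
        have h1 : ((k : AlgebraicClosure (ZMod p))) = f (k : ZMod p) := by simp [hf]
        rw [h1, hfp]
      rw [pow_succ, pow_mul, ih, add_pow_char, hcast, hyp]
      push_cast; ring
  have hn : (p ^ p - 1) / (p - 1) = ∑ i ∈ Finset.range p, p ^ i :=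
    (Nat.geomSum_eq hp.two_le p).symm
  rw [hn, ← Finset.prod_pow_eq_pow_sum]
  have step1 : ∏ i ∈ Finset.range p, y ^ p ^ i
      = ∏ i ∈ Finset.range p, (y + (i : AlgebraicClosure (ZMod p))) :=
    Finset.prod_congr rfl fun i _ => hk i
  rw [step1]
  have step2 : ∏ i ∈ Finset.range p, (y + (i : AlgebraicClosure (ZMod p)))
      = ∏ a : ZMod p, (y + f a) := by
    refine Finset.prod_nbij (fun i => (i : ZMod p)) ?_ ?_ ?_ ?_
    · intro i _; exact Finset.mem_univ _
    · intro i hi j hj hij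
      have := congrArg ZMod.val hij
      simpa [ZMod.val_natCast, Nat.mod_eq_of_lt (Finset.mem_range.mp hi),
        Nat.mod_eq_of_lt (Finset.mem_range.mp hj)] using this
    · intro a _
      exact ⟨a.val, Finset.mem_range.mpr (ZMod.val_lt a), by simp⟩
    · intro i _; simp [hf]
  rw [step2]
  have step3 : ∏ a : ZMod p, (y + f a) = ∏ a : ZMod p, (y - f a) := by
    refine Fintype.prod_equiv (Equiv.neg (ZMod p)) _ _ fun a => ?_
    simp [Equiv.neg_apply, sub_neg_eq_add]
  rw [step3]
  have hpoly : (X ^ p - X : (ZMod p)[X]) = ∏ a : ZMod p, (X - C a) := by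
    have hmonic : (X ^ p - X : (ZMod p)[X]).Monic := by
      apply (Polynomial.monic_X_pow p).sub_of_left
      rw [Polynomial.degree_X_pow, Polynomial.degree_X]
      exact_mod_cast hp.one_lt
    have hdeg := FiniteField.X_pow_card_sub_X_natDegree_eq (ZMod p) hp.one_lt
    have hroots := FiniteField.roots_X_pow_card_sub_X (ZMod p)
    rw [ZMod.card] at hroots
    have := Polynomial.prod_multiset_X_sub_C_of_monic_of_roots_card_eq hmonic
      (by rw [hroots, hdeg]; simp [ZMod.card])
    rw [hroots] at this
    rw [Finset.prod_eq_multiset_prod]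
    exact this.symm
  have := congrArg (Polynomial.aeval y) hpoly
  simp only [map_sub, map_pow, map_prod, Polynomial.aeval_X, Polynomial.aeval_C] at this
  rw [← this, hyp]
  ring
end

section
/- Let p be a prime and let r ≥ 1, with integers i_2, ..., i_r in {0, ..., d-1} and i_1 in {1, ..., d-1} such that i_1 + i_2 + ... + i_r ≡ 0 (mod d), where d divides q-1 and q is a power of p with r ≤ p. Let χ be a multiplicative character of F_q of order d. Then the character sum ∑_{ξ ∈ F_q} χ(ξ^{i_1}(ξ+1)^{i_2}···(ξ+r-1)^{i_r}) equals -1 + ∑_{η ∈ F_q} χ((1+η)^{i_2}(1+2η)^{i_3}···(1+(r-1)η)^{i_r}). -/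
open scoped Classical

/-!
Every factor `ξ + c j` with `ξ ≠ 0` equals `ξ * (1 + c j * ξ⁻¹)`, and the collected power
`ξ ^ (∑ j, e j)` is killed by `χ` since the order of `χ` divides the total exponent. So the
summand at `ξ ≠ 0` is the `η`-summand at `η = ξ⁻¹`. The summand at `ξ = 0` vanishes since one
shift is `0` with a positive exponent, while the `η`-summand at `η = 0` is `χ 1 = 1`: this
mismatch is the `-1`.
-/

open Finset

theorem Finset.prod_add_pow_eq_pow_sum_mul {F ι : Type*} [Field F] (s : Finset ι) (c : ι → F)
    (e : ι → ℕ) {ξ : F} (hξ : ξ ≠ 0) :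
    ∏ j ∈ s, (ξ + c j) ^ e j = ξ ^ (∑ j ∈ s, e j) * ∏ j ∈ s, (1 + c j * ξ⁻¹) ^ e j := by
  rw [← prod_pow_eq_pow_sum, ← prod_mul_distrib]
  refine prod_congr rfl fun j _ => ?_
  rw [← mul_pow]
  congr 1
  field_simp

namespace MulChar

theorem apply_pow_eq_one_of_pow_eq_one {R R' : Type*} [CommMonoid R] [CommMonoidWithZero R']
    {χ : MulChar R R'} {n : ℕ} (hχ : χ ^ n = 1) {a : R} (ha : IsUnit a) : χ (a ^ n) = 1 := by
  rw [map_pow, ← ha.unit_spec, ← pow_apply_coe, hχ, one_apply_coe]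

theorem sum_apply_prod_add_pow {F R ι : Type*} [Field F] [Fintype F] [CommRing R] [Fintype ι]
    (χ : MulChar F R) (c : ι → F) (e : ι → ℕ) (hχ : χ ^ (∑ j, e j) = 1) (j₀ : ι)
    (hc : c j₀ = 0) (he : e j₀ ≠ 0) :
    ∑ ξ, χ (∏ j, (ξ + c j) ^ e j) = -1 + ∑ η, χ (∏ j, (1 + c j * η) ^ e j) := by
  have hpointwise : ∀ ξ : F, χ (∏ j, (ξ + c j) ^ e j) =
      χ (∏ j, (1 + c j * ξ⁻¹) ^ e j) - if ξ = 0 then 1 else 0 := by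
    intro ξ
    by_cases hξ : ξ = 0
    · have hprod : ∏ j, (ξ + c j) ^ e j = 0 :=
        prod_eq_zero (mem_univ j₀) (by rw [hξ, hc, add_zero, zero_pow he])
      rw [hprod, MulChar.map_zero, hξ, inv_zero, if_pos rfl]
      simp
    · rw [prod_add_pow_eq_pow_sum_mul _ _ _ hξ, map_mul,
        apply_pow_eq_one_of_pow_eq_one hχ (isUnit_iff_ne_zero.mpr hξ), one_mul, if_neg hξ,
        sub_zero]
  rw [sum_congr rfl fun ξ _ => hpointwise ξ, sum_sub_distrib, Fintype.sum_ite_eq',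
    Fintype.sum_equiv (Equiv.inv F) (fun ξ => χ (∏ j, (1 + c j * ξ⁻¹) ^ e j))
      (fun η => χ (∏ j, (1 + c j * η) ^ e j)) fun _ => rfl]
  ring

end MulChar

theorem char_sum_shift_general
    (F : Type*) [Field F] [Fintype F]
    (d : ℕ) (r : ℕ) (hr : 1 ≤ r)
    (i : Fin r → ℕ) (hi0 : 1 ≤ i ⟨0, hr⟩)
    (hsum : d ∣ ∑ j, i j)
    (χ : MulChar F ℂ) (hχ : orderOf χ = d) :
    (∑ ξ : F, χ (∏ j : Fin r, (ξ + ((j : ℕ) : F)) ^ (i j))) =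
      -1 + ∑ η : F,
        χ (∏ j ∈ Finset.univ.filter (fun j : Fin r => j ≠ ⟨0, hr⟩),
            (1 + ((j : ℕ) : F) * η) ^ (i j)) := by
  have hχpow : χ ^ (∑ j, i j) = 1 := orderOf_dvd_iff_pow_eq_one.mp (hχ ▸ hsum)
  rw [MulChar.sum_apply_prod_add_pow χ _ i hχpow ⟨0, hr⟩ Nat.cast_zero (by omega)]
  congr 2 with η
  rw [prod_filter_of_ne]
  rintro j - hj rfl
  simp at hj

theorem char_sum_shift (p q : ℕ) (hp : p.Prime) (k : ℕ) (hk : 0 < k) (hq : q = p ^ k)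
    (F : Type*) [Field F] [Fintype F] [CharP F p] (hcard : Fintype.card F = q)
    (d : ℕ) (hd : d ∣ q - 1) (r : ℕ) (hr : 1 ≤ r) (hrp : r ≤ p)
    (i : Fin r → ℕ) (hilt : ∀ j, i j < d) (hi0 : 1 ≤ i ⟨0, hr⟩)
    (hsum : d ∣ ∑ j, i j)
    (χ : MulChar F ℂ) (hχ : orderOf χ = d) :
    (∑ ξ : F, χ (∏ j : Fin r, (ξ + ((j : ℕ) : F)) ^ (i j))) =
      -1 + ∑ η : F,
        χ (∏ j ∈ Finset.univ.filter (fun j : Fin r => j ≠ ⟨0, hr⟩),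
            (1 + ((j : ℕ) : F) * η) ^ (i j)) :=
  char_sum_shift_general F d r hr i hi0 hsum χ hχ
end

section
/- Let p = 3. There exists ξ in the field F_27 with 27 elements such that ξ^13 = (ξ+1)^13 = (ξ+2)^13 = 1; that is, ξ, ξ+1, ξ+2 are all squares in F_27. -/
open Polynomial Finset

theorem thirteen_in_N3 (F : Type*) [Field F] [Fintype F] (hcard : Fintype.card F = 27) :
    ∃ ξ : F, (ξ ^ 13 = 1 ∧ (ξ + 1) ^ 13 = 1 ∧ (ξ + 2) ^ 13 = 1) ∧
      (∃ a : F, a ^ 2 = ξ) ∧ (∃ b : F, b ^ 2 = ξ + 1) ∧ (∃ c : F, c ^ 2 = ξ + 2) := by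
  classical
  -- characteristic 3
  have hp : ringChar F = 3 := by
    obtain ⟨n, hprime, hc⟩ := FiniteField.card F (ringChar F)
    rw [hcard] at hc
    have hdvd : ringChar F ∣ 3 ^ 3 := by
      rw [show (3:ℕ)^3 = 27 by norm_num, hc]; exact dvd_pow_self _ (by positivity)
    exact (Nat.prime_dvd_prime_iff_eq hprime Nat.prime_three).mp
      (hprime.dvd_of_dvd_pow hdvd)
  haveI : CharP F 3 := hp ▸ ringChar.charP F
  haveI : Fact (Nat.Prime 3) := ⟨by norm_num⟩
  have h3 : (3 : F) = 0 := by exact_mod_cast CharP.cast_eq_zero F 3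
  -- every x satisfies x^27 = x
  have hpow : ∀ x : F, x ^ 27 = x := fun x => by
    have := FiniteField.pow_card x
    rwa [hcard] at this
  -- the trace polynomial and its root set
  set T : F[X] := X ^ 9 + X ^ 3 + X with hT
  have hTdeg : T.natDegree = 9 := by unfold T; compute_degree!
  have hTne : T ≠ 0 := fun h => by simp [h] at hTdeg
  set S : Finset F := T.roots.toFinset with hS
  have hScard : S.card ≤ 9 := by
    calc S.card ≤ Multiset.card T.roots := T.roots.toFinset_card_le
    _ ≤ T.natDegree := T.card_roots'
    _ = 9 := hTdeg
  -- the map x ↦ x^3 - x lands in S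
  set f : F → F := fun x => x ^ 3 - x with hf
  have hcube : ∀ x : F, (x ^ 3 - x) ^ 3 = x ^ 9 - x ^ 3 := fun x => by
    rw [sub_pow_char (p := 3)]; ring
  have hmaps : ∀ x : F, f x ∈ S := by
    intro x
    rw [hS, Multiset.mem_toFinset, mem_roots hTne]
    unfold T f
    simp only [IsRoot.def, eval_add, eval_pow, eval_X]
    have h1 : (x ^ 3 - x) ^ 9 = x ^ 27 - x ^ 9 := by
      rw [show (x ^ 3 - x) ^ 9 = ((x ^ 3 - x) ^ 3) ^ 3 by ring, hcube,
        sub_pow_char (p := 3)]; ring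
    rw [h1, hcube, hpow]; ring
  -- fibers of f have size ≤ 3, so the image has size ≥ 9
  have himg : 27 ≤ 3 * (univ.image f).card := by
    have := Finset.card_le_mul_card_image (f := f) univ 3 ?_
    · simpa [hcard] using this
    · intro b _
      have hqdeg : (X ^ 3 - X - C b : F[X]).natDegree = 3 := by compute_degree!
      set q : F[X] := X ^ 3 - X - C b with hq
      have hqne : q ≠ 0 := fun h => by simp [h] at hqdeg
      have hsub : {a ∈ (univ : Finset F) | f a = b} ⊆ q.roots.toFinset := by
        intro a ha
        simp only [Finset.mem_filter] at ha
        rw [Multiset.mem_toFinset, mem_roots hqne]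
        have h2 : a ^ 3 - a = b := ha.2
        unfold q
        simp only [IsRoot.def, eval_sub, eval_pow, eval_X, eval_C]
        linear_combination h2
      calc {a ∈ (univ : Finset F) | f a = b}.card ≤ q.roots.toFinset.card := Finset.card_le_card hsub
        _ ≤ Multiset.card q.roots := q.roots.toFinset_card_le
        _ ≤ q.natDegree := q.card_roots'
        _ = 3 := hqdeg
  have himgS : univ.image f ⊆ S := by
    intro b hb
    obtain ⟨x, _, rfl⟩ := Finset.mem_image.mp hb
    exact hmaps x
  have heq : univ.image f = S :=
    Finset.eq_of_subset_of_card_le himgS (by omega)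
  -- 1 ∈ S, hence ∃ g, g^3 - g = 1
  have h1S : (1 : F) ∈ S := by
    rw [hS, Multiset.mem_toFinset, mem_roots hTne]
    simp only [hT, IsRoot.def, eval_add, eval_pow, eval_X, one_pow]
    linear_combination h3
  obtain ⟨g, _, hg'⟩ := Finset.mem_image.mp (heq ▸ h1S)
  have hg : g ^ 3 = g + 1 := by
    have h2 : g ^ 3 - g = 1 := hg'
    linear_combination h2
  -- key power computations
  have h9 : g ^ 9 = g + 2 := by
    rw [show g ^ 9 = (g ^ 3) ^ 3 by ring, hg, add_pow_char (p := 3), hg]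
    ring
  have h13 : g ^ 13 = 1 := by
    rw [show g ^ 13 = g ^ 9 * g ^ 3 * g by ring, h9, hg]
    linear_combination hg + (g ^ 2 + g) * h3
  refine ⟨g, ⟨h13, ?_, ?_⟩, ⟨g ^ 7, ?_⟩, ⟨g ^ 8, ?_⟩, ⟨g ^ 11, ?_⟩⟩
  · rw [← hg, show (g ^ 3) ^ 13 = (g ^ 13) ^ 3 by ring, h13, one_pow]
  · rw [← h9, show (g ^ 9) ^ 13 = (g ^ 13) ^ 9 by ring, h13, one_pow]
  · rw [show (g ^ 7) ^ 2 = g ^ 13 * g by ring, h13, one_mul]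
  · rw [show (g ^ 8) ^ 2 = g ^ 13 * g ^ 3 by ring, h13, one_mul, hg]
  · rw [show (g ^ 11) ^ 2 = g ^ 13 * g ^ 9 by ring, h13, one_mul, h9]
end
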